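/- In the q-Brauer algebra Br_n(r,q), for all l, k with 1 ≤ l < k and 2k ≤ n, one has (g_1 g_2 ⋯ g_{2l}) e_{(k)} = (g_{2l+1} g_{2l} ⋯ g_2) e_{(k)} and (g_1^{−1} g_2^{−1} ⋯ g_{2l}^{−1}) e_{(k)} = (g_{2l+1}^{−1} g_{2l}^{−1} ⋯ g_2^{−1}) e_{(k)}. -/

import Mathlib

noncomputable section

namespace qB

/-- Generators of the q-Brauer algebra: `g i` (intended for `1 ≤ i ≤ n-1`) and `e`. -/
inductive BrGen : Type
  | g : ℕ → BrGen
  | e : BrGen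

/-- The generator `g i` inside the free algebra. -/
def fg (R : Type) [CommRing R] (i : ℕ) : FreeAlgebra R BrGen := FreeAlgebra.ι R (BrGen.g i)

/-- The generator `e` inside the free algebra. -/
def fe (R : Type) [CommRing R] : FreeAlgebra R BrGen := FreeAlgebra.ι R BrGen.e

/-- The element `g i ⁻¹ = q⁻¹ g i + (q⁻¹ - 1)·1` inside the free algebra (`qi = q⁻¹`). -/
def fgInv (R : Type) [CommRing R] (qi : R) (i : ℕ) : FreeAlgebra R BrGen :=
  qi • fg R i + (qi - 1) • (1 : FreeAlgebra R BrGen)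

/-- The word `g 2 * g 3 * (g 1)⁻¹ * (g 2)⁻¹`. -/
def fE2w (R : Type) [CommRing R] (qi : R) : FreeAlgebra R BrGen :=
  fg R 2 * fg R 3 * fgInv R qi 1 * fgInv R qi 2

/-- Defining relations of the q-Brauer algebra `Br_n(r,q)`; out-of-range generators are
killed (relation `zero`), so the algebra is presented exactly on `g 1, …, g (n-1), e`. -/
inductive BrRel (R : Type) [CommRing R] (n : ℕ) (q qi r δ : R) :
    FreeAlgebra R BrGen → FreeAlgebra R BrGen → Prop
  | zero (i : ℕ) (h : i = 0 ∨ n ≤ i) : BrRel R n q qi r δ (fg R i) 0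
  | quad (i : ℕ) (h1 : 1 ≤ i) (h2 : i < n) :
      BrRel R n q qi r δ (fg R i * fg R i)
        ((q - 1) • fg R i + q • (1 : FreeAlgebra R BrGen))
  | comm (i j : ℕ) (h1 : 1 ≤ i) (h2 : i + 1 < j) (h3 : j < n) :
      BrRel R n q qi r δ (fg R i * fg R j) (fg R j * fg R i)
  | braid (i : ℕ) (h1 : 1 ≤ i) (h2 : i + 1 < n) :
      BrRel R n q qi r δ (fg R i * fg R (i + 1) * fg R i)
        (fg R (i + 1) * fg R i * fg R (i + 1))
  | e1 : BrRel R n q qi r δ (fe R * fe R) (δ • fe R)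
  | e2comm (i : ℕ) (h1 : 3 ≤ i) (h2 : i < n) :
      BrRel R n q qi r δ (fe R * fg R i) (fg R i * fe R)
  | e2g1 (h : 2 ≤ n) : BrRel R n q qi r δ (fe R * fg R 1) (q • fe R)
  | e2g2 (h : 3 ≤ n) : BrRel R n q qi r δ (fe R * fg R 2 * fe R) (r • fe R)
  | e2g2inv (h : 3 ≤ n) : BrRel R n q qi r δ (fe R * fgInv R qi 2 * fe R) (qi • fe R)
  | e3l (h : 4 ≤ n) :
      BrRel R n q qi r δ (fE2w R qi * (fe R * fE2w R qi * fe R)) (fe R * fE2w R qi * fe R)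
  | e3r (h : 4 ≤ n) :
      BrRel R n q qi r δ ((fe R * fE2w R qi * fe R) * fE2w R qi) (fe R * fE2w R qi * fe R)

/-- The q-Brauer algebra `Br_n(r,q)` over `R`, with `qi = q⁻¹` and `δ = (r-1)/(q-1)`. -/
abbrev QBr (R : Type) [CommRing R] (n : ℕ) (q qi r δ : R) : Type :=
  RingQuot (BrRel R n q qi r δ)

/-- The generator `g i` of the q-Brauer algebra. -/
def G (R : Type) [CommRing R] (n : ℕ) (q qi r δ : R) (i : ℕ) : QBr R n q qi r δ :=
  RingQuot.mkAlgHom R (BrRel R n q qi r δ) (fg R i)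

/-- The generator `e` of the q-Brauer algebra. -/
def E (R : Type) [CommRing R] (n : ℕ) (q qi r δ : R) : QBr R n q qi r δ :=
  RingQuot.mkAlgHom R (BrRel R n q qi r δ) (fe R)

/-- The inverse `(g i)⁻¹ = q⁻¹ g i + (q⁻¹-1)` of the generator `g i`. -/
def GInv (R : Type) [CommRing R] (n : ℕ) (q qi r δ : R) (i : ℕ) : QBr R n q qi r δ :=
  RingQuot.mkAlgHom R (BrRel R n q qi r δ) (fgInv R qi i)

/-- Ascending product `g a * g (a+1) * ⋯ * g b` (equal to `1` when `b < a`). -/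
def ga (R : Type) [CommRing R] (n : ℕ) (q qi r δ : R) (a b : ℕ) : QBr R n q qi r δ :=
  ((List.range' a (b + 1 - a)).map (G R n q qi r δ)).prod

/-- Ascending product of inverses `(g a)⁻¹ * (g (a+1))⁻¹ * ⋯ * (g b)⁻¹`. -/
def gaInv (R : Type) [CommRing R] (n : ℕ) (q qi r δ : R) (a b : ℕ) : QBr R n q qi r δ :=
  ((List.range' a (b + 1 - a)).map (GInv R n q qi r δ)).prod

/-- Descending product `g a * g (a-1) * ⋯ * g b` (equal to `1` when `a < b`). -/
def gd (R : Type) [CommRing R] (n : ℕ) (q qi r δ : R) (a b : ℕ) : QBr R n q qi r δ :=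
  ((List.range' b (a + 1 - b)).reverse.map (G R n q qi r δ)).prod

/-- Descending product of inverses `(g a)⁻¹ * (g (a-1))⁻¹ * ⋯ * (g b)⁻¹`. -/
def gdInv (R : Type) [CommRing R] (n : ℕ) (q qi r δ : R) (a b : ℕ) : QBr R n q qi r δ :=
  ((List.range' b (a + 1 - b)).reverse.map (GInv R n q qi r δ)).prod

/-- The elements `e_(k)`: `e_(0) = 1`, `e_(1) = e`,
`e_(k+1) = e * (g 2 ⋯ g (2k+1)) * (g 1)⁻¹ ⋯ (g 2k)⁻¹ * e_(k)`. -/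
def ek (R : Type) [CommRing R] (n : ℕ) (q qi r δ : R) : ℕ → QBr R n q qi r δ
  | 0 => 1
  | k + 1 => E R n q qi r δ * ga R n q qi r δ 2 (2 * k + 1) *
      gaInv R n q qi r δ 1 (2 * k) * ek R n q qi r δ k

end qB

/-!
Write `W_j = g_{2j+2} g_{2j+3} g_{2j+1}⁻¹ g_{2j+2}⁻¹`, so that `W_0` is the word of relation (E3),
and `x = e_(k)`. Relation (E3) gives `W_0 e_(k) = e_(k)`; since
`e_(k+1) = e (g_2 ⋯ g_{2k+1}) (g_1⁻¹ ⋯ g_{2k}⁻¹) e_(k)` and this prefix conjugates `g_i` into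
`g_{i+2}`, induction gives `W_j x = x` whenever `j + 2 ≤ k`. Cancelling letters, `W_j x = x`
becomes `g_{2j+1}⁻¹ g_{2j+2}⁻¹ x = g_{2j+3}⁻¹ g_{2j+2}⁻¹ x`. Every odd generator `g_{2j+1}`,
`j < k`, acts on `x` by `q`: for `g_3` this comes from `e g_1 = q e` and `e g_2⁻¹ e = q⁻¹ e`, and
`W_j g_{2j+1} = g_{2j+3} W_j` carries it to the others. With this, the quadratic relation turns
the previous identity into `g_{2j+1} g_{2j+2} x = g_{2j+3} g_{2j+2} x`. These local moves and far
commutativity rewrite `g_1 ⋯ g_{2l}` into `g_{2l+1} ⋯ g_2` two letters at a time, in both the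
generators and their inverses.
-/

section SemiconjBy

variable {M : Type*} [Monoid M]

theorem SemiconjBy.of_inverses {a x y x' y' : M} (h : SemiconjBy a x y) (hx : x * x' = 1)
    (hy : y' * y = 1) : SemiconjBy a x' y' :=
  calc a * x' = y' * y * a * x' := by rw [hy, one_mul]
    _ = y' * a * (x * x') := by rw [mul_assoc y', ← h.eq]; simp only [mul_assoc]
    _ = y' * a := by rw [hx, mul_one]

theorem SemiconjBy.inverses_symm_left {a a' x y : M} (h : SemiconjBy a x y) (ha : a' * a = 1)
    (ha' : a * a' = 1) : SemiconjBy a' y x :=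
  calc a' * y = a' * y * (a * a') := by rw [ha', mul_one]
    _ = a' * a * x * a' := by rw [← mul_assoc, mul_assoc a', ← h.eq]; simp only [mul_assoc]
    _ = x * a' := by rw [ha, one_mul]

end SemiconjBy

namespace qB

section Products

variable {M : Type*} [Monoid M]

def ascProd (f : ℕ → M) (a b : ℕ) : M := ((List.range' a (b + 1 - a)).map f).prod

def descProd (f : ℕ → M) (a b : ℕ) : M := ((List.range' b (a + 1 - b)).reverse.map f).prod

variable (f : ℕ → M)

theorem ascProd_of_lt {a b : ℕ} (h : b < a) : ascProd f a b = 1 := by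
  simp [ascProd, show b + 1 - a = 0 by omega]

theorem descProd_of_lt {a b : ℕ} (h : a < b) : descProd f a b = 1 := by
  simp [descProd, show a + 1 - b = 0 by omega]

theorem ascProd_eq_mul {a b : ℕ} (h : a ≤ b) : ascProd f a b = f a * ascProd f (a + 1) b := by
  rw [ascProd, ascProd, show b + 1 - a = b + 1 - (a + 1) + 1 by omega, List.range'_succ]
  simp

theorem ascProd_succ {a b : ℕ} (h : a ≤ b + 1) :
    ascProd f a (b + 1) = ascProd f a b * f (b + 1) := by
  rw [ascProd, ascProd, show b + 1 + 1 - a = b + 1 - a + 1 by omega, List.range'_concat]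
  simp [show a + (b + 1 - a) = b + 1 by omega]

theorem descProd_succ {a b : ℕ} (h : b ≤ a + 1) :
    descProd f (a + 1) b = f (a + 1) * descProd f a b := by
  rw [descProd, descProd, show a + 1 + 1 - b = a + 1 - b + 1 by omega, List.range'_concat]
  simp [show b + (a + 1 - b) = a + 1 by omega]

variable {f}

theorem commute_ascProd {x : M} {a b : ℕ} (h : ∀ i, a ≤ i → i ≤ b → Commute x (f i)) :
    Commute x (ascProd f a b) :=
  Commute.list_prod_right _ _ <| by
    simp only [List.mem_map, List.mem_range'_1, forall_exists_index, and_imp]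
    rintro _ i hai hib rfl
    exact h i hai (by omega)

structure BraidRelations (f : ℕ → M) (n : ℕ) : Prop where
  braid : ∀ i, 1 ≤ i → i + 1 < n → f i * f (i + 1) * f i = f (i + 1) * f i * f (i + 1)
  comm : ∀ i j, 1 ≤ i → i + 2 ≤ j → j < n → Commute (f i) (f j)

namespace BraidRelations

variable {n : ℕ} (hf : BraidRelations f n)
include hf

theorem of_inverses {f' : ℕ → M} (hl : ∀ i, 1 ≤ i → i < n → f' i * f i = 1)
    (hr : ∀ i, 1 ≤ i → i < n → f i * f' i = 1) : BraidRelations f' n := by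
  let u : ∀ i, 1 ≤ i → i < n → Mˣ := fun i h1 h2 => ⟨f i, f' i, hr i h1 h2, hl i h1 h2⟩
  constructor
  · intro i h1 h2
    have hu : u i h1 (by omega) * u (i + 1) (by omega) h2 * u i h1 (by omega) =
        u (i + 1) (by omega) h2 * u i h1 (by omega) * u (i + 1) (by omega) h2 :=
      Units.ext (hf.braid i h1 h2)
    have hinv := congrArg (fun v => ((v⁻¹ : Mˣ) : M)) hu
    simp only [mul_inv_rev, Units.val_mul, mul_assoc] at hinv
    rw [mul_assoc, mul_assoc]
    exact hinv
  · intro i j h1 h2 h3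
    exact ((hf.comm i j h1 h2 h3).units_inv_left (u := u i h1 (by omega))).units_inv_right
      (u := u j (by omega) h3)

theorem semiconjBy_mul {i : ℕ} (h1 : 1 ≤ i) (h2 : i + 1 < n) :
    SemiconjBy (f i * f (i + 1)) (f i) (f (i + 1)) := by
  rw [SemiconjBy, hf.braid i h1 h2, mul_assoc]

theorem semiconjBy_mul_swap {i : ℕ} (h1 : 1 ≤ i) (h2 : i + 1 < n) :
    SemiconjBy (f (i + 1) * f i) (f (i + 1)) (f i) := by
  rw [SemiconjBy, ← hf.braid i h1 h2, mul_assoc]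

theorem semiconjBy_ascProd {s j m : ℕ} (hs : 1 ≤ s) (hsj : s ≤ j) (hjm : j < m) (hm : m < n) :
    SemiconjBy (ascProd f s m) (f j) (f (j + 1)) := by
  obtain ⟨d, rfl⟩ : ∃ d, j = s + d := ⟨j - s, by omega⟩
  induction d generalizing s with
  | zero =>
    have hc : Commute (ascProd f (s + 1 + 1) m) (f s) :=
      (commute_ascProd fun i hi _ => hf.comm s i hs hi (by omega)).symm
    simp only [add_zero]
    rw [SemiconjBy, ascProd_eq_mul f (by omega), ascProd_eq_mul f (by omega), ← mul_assoc,
      mul_assoc (f s * f (s + 1)), hc.eq, ← mul_assoc, hf.braid s hs (by omega)]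
    simp only [mul_assoc]
  | succ d ih =>
    rw [ascProd_eq_mul f (by omega)]
    exact (hf.comm s (s + (d + 1) + 1) hs (by omega) (by omega)).semiconjBy.mul_left
      (by simpa only [add_assoc, add_comm 1 d] using
        ih (s := s + 1) (by omega) (by omega) (by omega))

theorem ascProd_mul_eq_descProd_mul (x : M) {l : ℕ} (hl : 2 * l + 1 < n)
    (hstep : ∀ j < l, f (2 * j + 1) * (f (2 * j + 2) * x) = f (2 * j + 3) * (f (2 * j + 2) * x)) :
    ascProd f 1 (2 * l) * x = descProd f (2 * l + 1) 2 * x := by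
  induction l with
  | zero => simp [ascProd_of_lt, descProd_of_lt]
  | succ l ih =>
    have hc : ∀ i, 2 * l + 2 ≤ i → i < n → Commute (f i) (ascProd f 1 (2 * l)) := fun i hi hin =>
      commute_ascProd fun j hj hjl => (hf.comm j i hj (by omega) hin).symm
    rw [show 2 * (l + 1) = 2 * l + 1 + 1 by ring, ascProd_succ f (by omega),
      ascProd_succ f (by omega),
      show 2 * l + 1 + 1 + 1 = 2 * l + 2 + 1 by ring, descProd_succ f (by omega),
      descProd_succ f (by omega)]
    simp only [mul_assoc]
    rw [← ih (by omega) fun j hj => hstep j (by omega), hstep l (lt_add_one l),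
      ← mul_assoc, ← mul_assoc, ← (hc _ (by omega) (by omega)).eq, mul_assoc, mul_assoc,
      ← mul_assoc _ (f _), ← (hc _ (by omega) (by omega)).eq]
    simp only [mul_assoc]

end BraidRelations

end Products

section Relations

variable {R : Type} [CommRing R] {n : ℕ} {q qi r δ : R}

local notation "𝐠" => G R n q qi r δ
local notation "𝐠'" => GInv R n q qi r δ
local notation "𝐞" => E R n q qi r δ
local notation "𝐞𝐤" => ek R n q qi r δ

theorem mk_eq_of_rel {x y : FreeAlgebra R BrGen} (h : BrRel R n q qi r δ x y) :
    RingQuot.mkAlgHom R (BrRel R n q qi r δ) x = RingQuot.mkAlgHom R (BrRel R n q qi r δ) y :=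
  RingQuot.mkAlgHom_rel R h

theorem G_mul_self {i : ℕ} (h1 : 1 ≤ i) (h2 : i < n) : 𝐠 i * 𝐠 i = (q - 1) • 𝐠 i + q • 1 := by
  simpa only [G, map_mul, map_add, map_smul, map_one] using mk_eq_of_rel (BrRel.quad i h1 h2)

theorem braidRelations_G : BraidRelations 𝐠 n where
  braid i h1 h2 := by simpa only [G, map_mul] using mk_eq_of_rel (BrRel.braid i h1 h2)
  comm i j h1 h2 h3 := by
    simpa only [G, map_mul, commute_iff_eq] using mk_eq_of_rel (BrRel.comm i j h1 h2 h3)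

theorem commute_E_G {i : ℕ} (h1 : 3 ≤ i) (h2 : i < n) : Commute 𝐞 (𝐠 i) := by
  simpa only [G, E, map_mul, commute_iff_eq] using mk_eq_of_rel (BrRel.e2comm i h1 h2)

theorem E_mul_G_one (h : 2 ≤ n) : 𝐞 * 𝐠 1 = q • 𝐞 := by
  simpa only [G, E, map_mul, map_smul] using mk_eq_of_rel (BrRel.e2g1 h)

theorem E_mul_GInv_two_mul_E (h : 3 ≤ n) : 𝐞 * 𝐠' 2 * 𝐞 = qi • 𝐞 := by
  simpa only [GInv, E, map_mul, map_smul] using mk_eq_of_rel (BrRel.e2g2inv h)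

theorem GInv_eq (i : ℕ) : 𝐠' i = qi • 𝐠 i + (qi - 1) • 1 := by
  simp only [GInv, fgInv, map_add, map_smul, map_one]
  rfl

theorem commute_GInv_left {i : ℕ} {y : QBr R n q qi r δ} (h : Commute (𝐠 i) y) :
    Commute (𝐠' i) y := by
  rw [GInv_eq]
  exact (h.smul_left qi).add_left ((Commute.one_left y).smul_left _)

theorem commute_E_GInv {i : ℕ} (h1 : 3 ≤ i) (h2 : i < n) : Commute 𝐞 (𝐠' i) :=
  (commute_GInv_left (commute_E_G h1 h2).symm).symm

def e3Word (R : Type) [CommRing R] (n : ℕ) (q qi r δ : R) (j : ℕ) : QBr R n q qi r δ :=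
  G R n q qi r δ (2 * j + 2) * G R n q qi r δ (2 * j + 3) *
    GInv R n q qi r δ (2 * j + 1) * GInv R n q qi r δ (2 * j + 2)

def ekStep (R : Type) [CommRing R] (n : ℕ) (q qi r δ : R) (k : ℕ) : QBr R n q qi r δ :=
  E R n q qi r δ * ascProd (G R n q qi r δ) 2 (2 * k + 1) * ascProd (GInv R n q qi r δ) 1 (2 * k)

local notation "𝐰" => e3Word R n q qi r δ
local notation "𝐬" => ekStep R n q qi r δ

theorem e3Word_zero_mul (h : 4 ≤ n) : 𝐰 0 * (𝐞 * 𝐰 0 * 𝐞) = 𝐞 * 𝐰 0 * 𝐞 := by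
  simpa only [e3Word, G, E, GInv, fE2w, map_mul, Nat.mul_zero, Nat.zero_add] using
    mk_eq_of_rel (BrRel.e3l h)

theorem ek_succ (k : ℕ) : 𝐞𝐤 (k + 1) = 𝐬 k * 𝐞𝐤 k := rfl

theorem ek_eq_E_mul {k : ℕ} (hk : 1 ≤ k) : ∃ z, 𝐞𝐤 k = 𝐞 * z := by
  obtain ⟨m, rfl⟩ : ∃ m, k = m + 1 := ⟨k - 1, by omega⟩
  exact ⟨_, by rw [ek_succ, ekStep, mul_assoc, mul_assoc]⟩

theorem ekStep_mul_E {m : ℕ} (hm : 1 ≤ m) (hn : 2 * m + 2 ≤ n) :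
    𝐬 m * 𝐞 = 𝐞 * 𝐰 0 * 𝐞 * (ascProd 𝐠 4 (2 * m + 1) * ascProd 𝐠' 3 (2 * m)) := by
  have hA : ∀ i, 1 ≤ i → i ≤ 2 → Commute (ascProd 𝐠 4 (2 * m + 1)) (𝐠' i) := fun i h1 h2 =>
    (commute_GInv_left (commute_ascProd fun j hj hjm =>
      braidRelations_G.comm i j h1 (by omega) (by omega))).symm
  have hAE : Commute (ascProd 𝐠 4 (2 * m + 1)) 𝐞 :=
    (commute_ascProd fun j hj hjm => commute_E_G (by omega) (by omega)).symm
  have hBE : Commute (ascProd 𝐠' 3 (2 * m)) 𝐞 :=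
    (commute_ascProd fun j hj hjm => commute_E_GInv (by omega) (by omega)).symm
  rw [ekStep, ascProd_eq_mul _ (a := 2) (by omega), ascProd_eq_mul _ (a := 3) (by omega),
    ascProd_eq_mul _ (a := 1) (by omega), ascProd_eq_mul _ (a := 2) (by omega)]
  simp only [e3Word, mul_assoc]
  rw [hBE.eq, (hA 1 le_rfl (by omega)).left_comm, (hA 2 (by omega) le_rfl).left_comm,
    hAE.left_comm]

variable (hq : q * qi = 1)
include hq

theorem G_mul_GInv {i : ℕ} (h1 : 1 ≤ i) (h2 : i < n) : 𝐠 i * 𝐠' i = 1 := by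
  rw [GInv_eq, mul_add, mul_smul_comm, mul_smul_comm, mul_one, G_mul_self h1 h2]
  match_scalars <;> linear_combination hq

theorem GInv_mul_G {i : ℕ} (h1 : 1 ≤ i) (h2 : i < n) : 𝐠' i * 𝐠 i = 1 := by
  rw [(commute_GInv_left (Commute.refl (𝐠 i))).eq, G_mul_GInv hq h1 h2]

theorem braidRelations_GInv : BraidRelations 𝐠' n :=
  braidRelations_G.of_inverses (fun _ h1 h2 => GInv_mul_G hq h1 h2)
    (fun _ h1 h2 => G_mul_GInv hq h1 h2)

theorem G_mul_GInv_mul {i : ℕ} (h1 : 1 ≤ i) (h2 : i < n) (y : QBr R n q qi r δ) :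
    𝐠 i * (𝐠' i * y) = y := by
  rw [← mul_assoc, G_mul_GInv hq h1 h2, one_mul]

theorem GInv_mul_G_mul {i : ℕ} (h1 : 1 ≤ i) (h2 : i < n) (y : QBr R n q qi r δ) :
    𝐠' i * (𝐠 i * y) = y := by
  rw [← mul_assoc, GInv_mul_G hq h1 h2, one_mul]

theorem isUnit_G {i : ℕ} (h1 : 1 ≤ i) (h2 : i < n) : IsUnit (𝐠 i) :=
  ⟨⟨𝐠 i, 𝐠' i, G_mul_GInv hq h1 h2, GInv_mul_G hq h1 h2⟩, rfl⟩

theorem isUnit_GInv {i : ℕ} (h1 : 1 ≤ i) (h2 : i < n) : IsUnit (𝐠' i) :=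
  ⟨⟨𝐠' i, 𝐠 i, GInv_mul_G hq h1 h2, G_mul_GInv hq h1 h2⟩, rfl⟩

theorem isUnit_e3Word {j : ℕ} (hj : 2 * j + 3 < n) : IsUnit (𝐰 j) :=
  (((isUnit_G hq (by omega) (by omega)).mul (isUnit_G hq (by omega) hj)).mul
    (isUnit_GInv hq (by omega) (by omega))).mul (isUnit_GInv hq (by omega) (by omega))

theorem semiconjBy_ekStep_G {m i : ℕ} (h1 : 1 ≤ i) (h2 : i + 2 ≤ 2 * m + 1)
    (hn : 2 * m + 2 ≤ n) : SemiconjBy (𝐬 m) (𝐠 i) (𝐠 (i + 2)) :=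
  ((commute_E_G (by omega) (by omega)).semiconjBy.mul_left
    (braidRelations_G.semiconjBy_ascProd (by omega) (by omega) (by omega) (by omega))).mul_left
    (((braidRelations_GInv hq).semiconjBy_ascProd le_rfl h1 (by omega) (by omega)).of_inverses
      (GInv_mul_G hq h1 (by omega)) (G_mul_GInv hq (by omega) (by omega)))

theorem semiconjBy_ekStep_GInv {m i : ℕ} (h1 : 1 ≤ i) (h2 : i + 2 ≤ 2 * m + 1)
    (hn : 2 * m + 2 ≤ n) : SemiconjBy (𝐬 m) (𝐠' i) (𝐠' (i + 2)) :=
  (semiconjBy_ekStep_G hq h1 h2 hn).of_inverses (G_mul_GInv hq h1 (by omega))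
    (GInv_mul_G hq (by omega) (by omega))

theorem semiconjBy_ekStep_e3Word {m j : ℕ} (hj : j + 2 ≤ m) (hn : 2 * m + 2 ≤ n) :
    SemiconjBy (𝐬 m) (𝐰 j) (𝐰 (j + 1)) :=
  (((semiconjBy_ekStep_G hq (i := 2 * j + 2) (by omega) (by omega) hn).mul_right
    (semiconjBy_ekStep_G hq (i := 2 * j + 3) (by omega) (by omega) hn)).mul_right
    (semiconjBy_ekStep_GInv hq (i := 2 * j + 1) (by omega) (by omega) hn)).mul_right
    (semiconjBy_ekStep_GInv hq (i := 2 * j + 2) (by omega) (by omega) hn)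

theorem e3Word_mul_ek {j k : ℕ} (hjk : j + 2 ≤ k) (hk : 2 * k ≤ n) : 𝐰 j * 𝐞𝐤 k = 𝐞𝐤 k := by
  induction j generalizing k with
  | zero =>
    obtain ⟨m, rfl⟩ : ∃ m, k = m + 2 := ⟨k - 2, by omega⟩
    obtain ⟨z, hz⟩ : ∃ z, 𝐞𝐤 (m + 1) = 𝐞 * z := ek_eq_E_mul le_add_self
    rw [ek_succ, hz, ← mul_assoc (𝐬 _), ekStep_mul_E (by omega) (by omega), mul_assoc _ _ z,
      ← mul_assoc (𝐰 0), e3Word_zero_mul (by omega)]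
  | succ j ih =>
    obtain ⟨m, rfl⟩ : ∃ m, k = m + 1 := ⟨k - 1, by omega⟩
    rw [ek_succ, ← mul_assoc, ← (semiconjBy_ekStep_e3Word hq (by omega) (by omega)).eq,
      mul_assoc, ih (by omega) (by omega)]

section FixedByE3Word

variable {j : ℕ} (hj : 2 * j + 3 < n) {x : QBr R n q qi r δ} (hx : e3Word R n q qi r δ j * x = x)
include hj hx

theorem GInv_mul_GInv_mul_of_e3Word_mul :
    𝐠' (2 * j + 1) * (𝐠' (2 * j + 2) * x) = 𝐠' (2 * j + 3) * (𝐠' (2 * j + 2) * x) := by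
  have h : 𝐠 (2 * j + 3) * (𝐠' (2 * j + 1) * (𝐠' (2 * j + 2) * x)) = 𝐠' (2 * j + 2) * x := by
    conv_rhs => rw [← hx, e3Word, mul_assoc, mul_assoc, mul_assoc,
      GInv_mul_G_mul hq (by omega) (by omega)]
  rw [← GInv_mul_G_mul hq (i := 2 * j + 3) (by omega) hj (𝐠' _ * _), h]

theorem G_mul_GInv_mul_of_e3Word_mul :
    𝐠 (2 * j + 1) * (𝐠' (2 * j + 2) * x) = 𝐠 (2 * j + 3) * (𝐠' (2 * j + 2) * x) := by
  set y := 𝐠' (2 * j + 2) * x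
  have hc : Commute (𝐠 (2 * j + 1)) (𝐠 (2 * j + 3)) :=
    braidRelations_G.comm _ _ (by omega) (by omega) hj
  calc 𝐠 (2 * j + 1) * y = 𝐠 (2 * j + 1) * (𝐠 (2 * j + 3) * (𝐠' (2 * j + 3) * y)) := by
        rw [G_mul_GInv_mul hq (by omega) hj]
    _ = 𝐠 (2 * j + 3) * (𝐠 (2 * j + 1) * (𝐠' (2 * j + 1) * y)) := by
        rw [← GInv_mul_GInv_mul_of_e3Word_mul hq hj hx, hc.left_comm]
    _ = 𝐠 (2 * j + 3) * y := by rw [G_mul_GInv_mul hq (by omega) (by omega)]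

theorem G_mul_G_mul_of_e3Word_mul (hodd : 𝐠 (2 * j + 1) * x = 𝐠 (2 * j + 3) * x) :
    𝐠 (2 * j + 1) * (𝐠 (2 * j + 2) * x) = 𝐠 (2 * j + 3) * (𝐠 (2 * j + 2) * x) := by
  have h := G_mul_GInv_mul_of_e3Word_mul hq hj hx
  simp only [GInv_eq, add_mul, smul_mul_assoc, one_mul, mul_add, mul_smul_comm, hodd] at h
  have h' := congrArg (q • ·) (add_right_cancel h)
  simpa only [smul_smul, hq, one_smul] using h'

end FixedByE3Word

theorem semiconjBy_e3Word_G {j : ℕ} (hj : 2 * j + 3 < n) :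
    SemiconjBy (𝐰 j) (𝐠 (2 * j + 1)) (𝐠 (2 * j + 3)) := by
  have hinv : SemiconjBy (𝐠' (2 * j + 1) * 𝐠' (2 * j + 2)) (𝐠 (2 * j + 1)) (𝐠 (2 * j + 2)) :=
    (braidRelations_G.semiconjBy_mul_swap (i := 2 * j + 1) (by omega) (by omega)).inverses_symm_left
      (by rw [mul_assoc, GInv_mul_G_mul hq (by omega) (by omega),
        GInv_mul_G hq (by omega) (by omega)])
      (by rw [mul_assoc, G_mul_GInv_mul hq (by omega) (by omega),
        G_mul_GInv hq (by omega) (by omega)])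
  rw [e3Word, mul_assoc _ (𝐠' _)]
  exact (braidRelations_G.semiconjBy_mul (i := 2 * j + 2) (by omega) hj).mul_left hinv

theorem G_three_mul_ek {k : ℕ} (hk : 2 ≤ k) (hn : 2 * k ≤ n) : 𝐠 3 * 𝐞𝐤 k = q • 𝐞𝐤 k := by
  obtain ⟨z, hz⟩ : ∃ z, 𝐞𝐤 k = 𝐞 * z := ek_eq_E_mul (by omega)
  set x := 𝐞𝐤 k
  have hEy : 𝐞 * (𝐠' 2 * x) = qi • x := by
    rw [hz, ← mul_assoc, ← mul_assoc, E_mul_GInv_two_mul_E (by omega), smul_mul_assoc]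
  have h13 : 𝐠 1 * (𝐠' 2 * x) = 𝐠 3 * (𝐠' 2 * x) :=
    G_mul_GInv_mul_of_e3Word_mul hq (j := 0) (by omega) (e3Word_mul_ek hq (by omega) hn)
  have h : qi • (𝐠 3 * x) = x :=
    calc qi • (𝐠 3 * x) = 𝐞 * (𝐠 3 * (𝐠' 2 * x)) := by
          rw [(commute_E_G le_rfl (by omega)).left_comm, hEy, mul_smul_comm]
      _ = 𝐞 * 𝐠 1 * (𝐠' 2 * x) := by rw [← h13, mul_assoc]
      _ = x := by rw [E_mul_G_one (by omega), smul_mul_assoc, hEy, smul_smul, hq, one_smul]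
  rw [← h, smul_smul, hq, one_smul, h]

theorem G_odd_mul_ek {j k : ℕ} (hjk : j < k) (hk : 2 ≤ k) (hn : 2 * k ≤ n) :
    𝐠 (2 * j + 1) * 𝐞𝐤 k = q • 𝐞𝐤 k := by
  induction j with
  | zero =>
    have hW : 𝐰 0 * 𝐞𝐤 k = 𝐞𝐤 k := e3Word_mul_ek hq (by omega) hn
    apply (isUnit_e3Word hq (j := 0) (by omega)).mul_left_cancel
    rw [← mul_assoc, (semiconjBy_e3Word_G hq (j := 0) (by omega)).eq, mul_assoc, hW,
      G_three_mul_ek hq hk hn, mul_smul_comm, hW]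
  | succ j ih =>
    have hW : 𝐰 j * 𝐞𝐤 k = 𝐞𝐤 k := e3Word_mul_ek hq (by omega) hn
    show 𝐠 (2 * j + 3) * _ = _
    rw [← hW, ← mul_assoc, ← (semiconjBy_e3Word_G hq (by omega)).eq, mul_assoc,
      ih (by omega), mul_smul_comm]

end Relations

end qB

open qB in
theorem stmt8_general (R : Type) [CommRing R] (n : ℕ) (q qi r δ : R)
    (hq : q * qi = 1)
    (l k : ℕ) (h2 : l < k) (h3 : 2 * k ≤ n) :
    ga R n q qi r δ 1 (2 * l) * ek R n q qi r δ k =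
      gd R n q qi r δ (2 * l + 1) 2 * ek R n q qi r δ k ∧
    gaInv R n q qi r δ 1 (2 * l) * ek R n q qi r δ k =
      gdInv R n q qi r δ (2 * l + 1) 2 * ek R n q qi r δ k := by
  have hW : ∀ j < l, e3Word R n q qi r δ j * ek R n q qi r δ k = ek R n q qi r δ k :=
    fun j hj => e3Word_mul_ek hq (by omega) h3
  refine ⟨braidRelations_G.ascProd_mul_eq_descProd_mul _ (by omega) fun j hj => ?_,
    (braidRelations_GInv hq).ascProd_mul_eq_descProd_mul _ (by omega) fun j hj =>
      GInv_mul_GInv_mul_of_e3Word_mul hq (by omega) (hW j hj)⟩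
  exact G_mul_G_mul_of_e3Word_mul hq (by omega) (hW j hj)
    ((G_odd_mul_ek hq (j := j) (by omega) (by omega) h3).trans
      (G_odd_mul_ek hq (j := j + 1) (by omega) (by omega) h3).symm)

open qB in
/-- `(g_1 g_2 ⋯ g_{2l}) e_(k) = (g_{2l+1} g_{2l} ⋯ g_2) e_(k)` and the
inverse version, for `1 ≤ l < k` and `2k ≤ n`. -/
theorem stmt8 (R : Type) [CommRing R] (n : ℕ) (q qi r ri δ : R)
    (hq : q * qi = 1) (hr : r * ri = 1) (hδ : (q - 1) * δ = r - 1)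
    (l k : ℕ) (h1 : 1 ≤ l) (h2 : l < k) (h3 : 2 * k ≤ n) :
    ga R n q qi r δ 1 (2 * l) * ek R n q qi r δ k =
      gd R n q qi r δ (2 * l + 1) 2 * ek R n q qi r δ k ∧
    gaInv R n q qi r δ 1 (2 * l) * ek R n q qi r δ k =
      gdInv R n q qi r δ (2 * l + 1) 2 * ek R n q qi r δ k :=
  stmt8_general R n q qi r δ hq l k h2 h3
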